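/- Assume μ1 > 0 and μ2 > 0. The function w glues the two halves of the hyperbola ℛ: for every real θ1 ≤ θ1⁻ one has w(Θ2⁺(θ1)) = w(Θ2⁻(θ1)); moreover, at the vertex of the hyperbola, w(Θ2⁺(θ1⁻)) = −1. -/

import Mathlib

/-- The complex discriminant `d(θ1)`. -/
noncomputable def discrim1C (σ11 σ12 σ22 μ1 μ2 : ℝ) (θ1 : ℂ) : ℂ :=
  ((σ12^2 - σ11 * σ22 : ℝ) : ℂ) * θ1^2
    + 2 * ((μ2 * σ12 - μ1 * σ22 : ℝ) : ℂ) * θ1 + ((μ2^2 : ℝ) : ℂ)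

/-- The branch `Θ2⁺`. -/
noncomputable def Theta2plus (σ11 σ12 σ22 μ1 μ2 : ℝ) (θ1 : ℂ) : ℂ :=
  (-((σ12 : ℂ) * θ1 + (μ2 : ℂ))
    + (discrim1C σ11 σ12 σ22 μ1 μ2 θ1) ^ ((1 : ℂ)/2)) / (σ22 : ℂ)

/-- The branch `Θ2⁻`. -/
noncomputable def Theta2minus (σ11 σ12 σ22 μ1 μ2 : ℝ) (θ1 : ℂ) : ℂ :=
  (-((σ12 : ℂ) * θ1 + (μ2 : ℂ))
    - (discrim1C σ11 σ12 σ22 μ1 μ2 θ1) ^ ((1 : ℂ)/2)) / (σ22 : ℂ)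

/-- The branch point `θ1⁻`. -/
noncomputable def theta1minus (σ11 σ12 σ22 μ1 μ2 : ℝ) : ℝ :=
  ((μ2 * σ12 - μ1 * σ22)
    - Real.sqrt ((μ2 * σ12 - μ1 * σ22)^2 + μ2^2 * (σ11 * σ22 - σ12^2)))
  / (σ11 * σ22 - σ12^2)

/-- The branch point `θ2⁺`. -/
noncomputable def theta2plus (σ11 σ12 σ22 μ1 μ2 : ℝ) : ℝ :=
  ((μ1 * σ12 - μ2 * σ11)
    + Real.sqrt ((μ1 * σ12 - μ2 * σ11)^2 + μ1^2 * (σ11 * σ22 - σ12^2)))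
  / (σ11 * σ22 - σ12^2)

/-- The branch point `θ2⁻`. -/
noncomputable def theta2minus (σ11 σ12 σ22 μ1 μ2 : ℝ) : ℝ :=
  ((μ1 * σ12 - μ2 * σ11)
    - Real.sqrt ((μ1 * σ12 - μ2 * σ11)^2 + μ1^2 * (σ11 * σ22 - σ12^2)))
  / (σ11 * σ22 - σ12^2)

/-- The angle `β = arccos(−σ12/√(σ11σ22))`. -/
noncomputable def betaAngle (σ11 σ12 σ22 : ℝ) : ℝ :=
  Real.arccos (-σ12 / Real.sqrt (σ11 * σ22))

/-- Generalized Chebyshev function `T_a(z)`, with principal complex powers. -/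
noncomputable def chebT (a z : ℂ) : ℂ :=
  (1/2) * ((z + (z^2 - 1) ^ ((1 : ℂ)/2)) ^ a + (z - (z^2 - 1) ^ ((1 : ℂ)/2)) ^ a)

/-- The conformal gluing function `w`. -/
noncomputable def gluingW (σ11 σ12 σ22 μ1 μ2 : ℝ) (θ2 : ℂ) : ℂ :=
  chebT ((Real.pi / betaAngle σ11 σ12 σ22 : ℝ) : ℂ)
    (-(2 * θ2 - ((theta2plus σ11 σ12 σ22 μ1 μ2 + theta2minus σ11 σ12 σ22 μ1 μ2 : ℝ) : ℂ))
      / ((theta2plus σ11 σ12 σ22 μ1 μ2 - theta2minus σ11 σ12 σ22 μ1 μ2 : ℝ) : ℂ))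

/-!
For `θ1 ≤ θ1⁻` the discriminant `d(θ1)` is a nonpositive real, so `Θ2±(θ1)` are complex
conjugate, and the affine normalisation inside `w` maps them to `cosh (±τ + iβ)` with
`cosh τ = hyperbolaCosh θ1 ≥ 1`, which equals `1` exactly at the vertex `θ1⁻`.
For `v = exp (τ + iβ)` both choices of the square root give
`T_a ((v + v⁻¹) / 2) = (v ^ a + (v⁻¹) ^ a) / 2`, and for `a = π / β` the principal powers are
`v ^ a = -exp (a τ)` and `(v⁻¹) ^ a = -exp (-a τ)`, because `a β = π`.
Hence `w (Θ2±(θ1)) = -cosh (π τ / β)` on both branches, which is `-1` at the vertex.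
-/

open Complex

theorem cpow_one_half_sq (x : ℂ) : (x ^ ((1 : ℂ) / 2)) ^ 2 = x := by
  simp [one_div]

theorem chebT_joukowsky (a : ℂ) {v : ℂ} (hv : v ≠ 0) :
    chebT a ((v + v⁻¹) / 2) = (v ^ a + v⁻¹ ^ a) / 2 := by
  have hroot : (((v + v⁻¹) / 2) ^ 2 - 1) ^ ((1 : ℂ) / 2) = (v - v⁻¹) / 2 ∨
      (((v + v⁻¹) / 2) ^ 2 - 1) ^ ((1 : ℂ) / 2) = -((v - v⁻¹) / 2) := by
    rw [← sq_eq_sq_iff_eq_or_eq_neg, cpow_one_half_sq]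
    linear_combination mul_inv_cancel₀ hv
  rcases hroot with h | h <;> rw [chebT, h] <;> ring_nf

theorem exp_cpow_eq_exp_mul {w : ℂ} (h₁ : -Real.pi < w.im) (h₂ : w.im ≤ Real.pi) (a : ℂ) :
    exp w ^ a = exp (a * w) := by
  rw [cpow_def_of_ne_zero (exp_ne_zero w), log_exp h₁ h₂, mul_comm]

theorem chebT_pi_div_cosh {β : ℝ} (hβ₀ : 0 < β) (hβπ : β < Real.pi) (τ : ℝ) :
    chebT ((Real.pi / β : ℝ) : ℂ) (cosh (τ + β * I)) = -Real.cosh (Real.pi / β * τ) := by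
  have hβ : (β : ℂ) ≠ 0 := ofReal_ne_zero.2 hβ₀.ne'
  set a : ℂ := ((Real.pi / β : ℝ) : ℂ)
  have hpos : exp (τ + β * I) ^ a = -exp (a * τ) := by
    rw [exp_cpow_eq_exp_mul (by simp; linarith) (by simp; linarith),
      show a * (τ + β * I) = a * τ + Real.pi * I by simp only [a]; push_cast; field_simp,
      exp_add, exp_pi_mul_I, mul_neg_one]
  have hneg : exp (-(τ + β * I)) ^ a = -exp (-(a * τ)) := by
    rw [exp_cpow_eq_exp_mul (by simp; linarith) (by simp; linarith),
      show a * -(τ + β * I) = -(a * τ) - Real.pi * I by simp only [a]; push_cast; field_simp; ring,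
      exp_sub, exp_pi_mul_I, div_neg, div_one]
  rw [cosh, exp_neg (τ + β * I), chebT_joukowsky _ (exp_ne_zero _), ← exp_neg, hpos, hneg,
    ofReal_cosh, cosh]
  push_cast [a]
  ring

theorem cosh_add_mul_I (x y : ℝ) :
    cosh (x + y * I) = (Real.cosh x * Real.cos y : ℝ) + (Real.sinh x * Real.sin y : ℝ) * I := by
  rw [cosh_add, cosh_mul_I, sinh_mul_I]
  push_cast
  ring

theorem chebT_pi_div_eq_neg_cosh_arcosh {β : ℝ} (hβ₀ : 0 < β) (hβπ : β < Real.pi) {c : ℝ}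
    (hc : 1 ≤ c) {x y : ℝ} (hx : x = c * Real.cos β) (hy : y ^ 2 = (c ^ 2 - 1) * Real.sin β ^ 2) :
    chebT ((Real.pi / β : ℝ) : ℂ) (x + y * I) = -Real.cosh (Real.pi / β * Real.arcosh c) := by
  set τ := Real.arcosh c
  have hsinh : y ^ 2 = (Real.sinh τ * Real.sin β) ^ 2 := by
    rw [hy, mul_pow, Real.sinh_arcosh hc, Real.sq_sqrt (by nlinarith)]
  rw [hx, ← Real.cosh_arcosh hc]
  rcases sq_eq_sq_iff_eq_or_eq_neg.1 hsinh with rfl | rfl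
  · rw [← cosh_add_mul_I, chebT_pi_div_cosh hβ₀ hβπ]
  · rw [← Real.cosh_neg, ← neg_mul, ← Real.sinh_neg, ← cosh_add_mul_I,
      chebT_pi_div_cosh hβ₀ hβπ, mul_neg, Real.cosh_neg]

theorem exists_eq_ofReal_mul_I_of_sq_eq {s : ℂ} {x : ℝ} (hx : x ≤ 0) (h : s ^ 2 = x) :
    ∃ y : ℝ, s = y * I ∧ y ^ 2 = -x := by
  have hre : s.re ^ 2 - s.im ^ 2 = x := by simpa [sq] using congrArg re h
  have him : s.re * s.im + s.im * s.re = 0 := by simpa [sq] using congrArg im h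
  have hre0 : s.re = 0 := pow_eq_zero_iff two_ne_zero |>.1 (by nlinarith)
  refine ⟨s.im, ?_, by rw [hre0] at hre; linarith⟩
  apply Complex.ext <;> simp [hre0]

noncomputable def discrim1 (σ11 σ12 σ22 μ1 μ2 θ1 : ℝ) : ℝ :=
  (σ12 ^ 2 - σ11 * σ22) * θ1 ^ 2 + 2 * (μ2 * σ12 - μ1 * σ22) * θ1 + μ2 ^ 2

noncomputable def hyperbolaCosh (σ11 σ12 σ22 μ1 μ2 θ1 : ℝ) : ℝ :=
  (μ2 * σ12 - μ1 * σ22 - (σ11 * σ22 - σ12 ^ 2) * θ1)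
    / √((μ2 * σ12 - μ1 * σ22) ^ 2 + μ2 ^ 2 * (σ11 * σ22 - σ12 ^ 2))

section Model

variable {σ11 σ12 σ22 μ1 μ2 : ℝ}

local notation "detΣ" => σ11 * σ22 - σ12 ^ 2

local notation "radicand₁" => (μ2 * σ12 - μ1 * σ22) ^ 2 + μ2 ^ 2 * detΣ

local notation "radicand₂" => (μ1 * σ12 - μ2 * σ11) ^ 2 + μ1 ^ 2 * detΣ

theorem sq_neg_div_sqrt_eq_one_sub (hdet : 0 < detΣ) :
    (-σ12 / √(σ11 * σ22)) ^ 2 = 1 - detΣ / (σ11 * σ22) := by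
  have : 0 < σ11 * σ22 := by nlinarith
  rw [div_pow, Real.sq_sqrt this.le, one_sub_div this.ne', neg_sq]
  ring

theorem cos_betaAngle (hdet : 0 < detΣ) :
    Real.cos (betaAngle σ11 σ12 σ22) = -σ12 / √(σ11 * σ22) := by
  have hsq : (-σ12 / √(σ11 * σ22)) ^ 2 ≤ 1 := by
    rw [sq_neg_div_sqrt_eq_one_sub hdet, sub_le_self_iff]
    exact (div_pos hdet (by nlinarith)).le
  obtain ⟨h₁, h₂⟩ := abs_le.1 ((sq_le_one_iff_abs_le_one _).1 hsq)
  exact Real.cos_arccos h₁ h₂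

theorem sin_betaAngle_sq (hdet : 0 < detΣ) :
    Real.sin (betaAngle σ11 σ12 σ22) ^ 2 = detΣ / (σ11 * σ22) := by
  rw [Real.sin_sq, cos_betaAngle hdet, sq_neg_div_sqrt_eq_one_sub hdet]
  ring

theorem betaAngle_pos_and_lt_pi (hdet : 0 < detΣ) :
    0 < betaAngle σ11 σ12 σ22 ∧ betaAngle σ11 σ12 σ22 < Real.pi := by
  have hsin : Real.sin (betaAngle σ11 σ12 σ22) ≠ 0 := by
    rw [← pow_ne_zero_iff two_ne_zero, sin_betaAngle_sq hdet]
    exact (div_pos hdet (by nlinarith)).ne'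
  refine ⟨(Real.arccos_nonneg _).lt_of_ne fun h => hsin ?_,
    (Real.arccos_le_pi _).lt_of_ne fun h => hsin ?_⟩
  · rw [betaAngle, ← h, Real.sin_zero]
  · rw [betaAngle, h, Real.sin_pi]

theorem theta2plus_add_theta2minus :
    theta2plus σ11 σ12 σ22 μ1 μ2 + theta2minus σ11 σ12 σ22 μ1 μ2
      = 2 * (μ1 * σ12 - μ2 * σ11) / detΣ := by
  rw [theta2plus, theta2minus, ← add_div]
  ring

theorem theta2plus_sub_theta2minus :
    theta2plus σ11 σ12 σ22 μ1 μ2 - theta2minus σ11 σ12 σ22 μ1 μ2 = 2 * √radicand₂ / detΣ := by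
  rw [theta2plus, theta2minus, ← sub_div]
  ring

theorem radicand₁_mul_eq : radicand₁ * (σ11 * σ22) = σ22 ^ 2 * radicand₂ := by
  ring

theorem radicand₂_pos (hdet : 0 < detΣ) (hμ2 : 0 < μ2) : 0 < radicand₂ := by
  have : 0 < radicand₁ := by positivity
  nlinarith [@radicand₁_mul_eq σ11 σ12 σ22 μ1 μ2]

theorem sqrt_radicand₁_mul_sqrt (hσ22 : 0 < σ22) (hdet : 0 < detΣ) :
    √radicand₁ * √(σ11 * σ22) = σ22 * √radicand₂ := by
  rw [← Real.sqrt_mul (by positivity), radicand₁_mul_eq, Real.sqrt_mul (sq_nonneg _),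
    Real.sqrt_sq hσ22.le]

theorem discrim1C_ofReal (θ1 : ℝ) :
    discrim1C σ11 σ12 σ22 μ1 μ2 θ1 = discrim1 σ11 σ12 σ22 μ1 μ2 θ1 := by
  rw [discrim1C, discrim1]
  push_cast
  ring

theorem one_le_hyperbolaCosh (hdet : 0 < detΣ) (hμ2 : 0 < μ2) {θ1 : ℝ}
    (hθ1 : θ1 ≤ theta1minus σ11 σ12 σ22 μ1 μ2) : 1 ≤ hyperbolaCosh σ11 σ12 σ22 μ1 μ2 θ1 := by
  rw [theta1minus, le_div_iff₀ hdet] at hθ1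
  rw [hyperbolaCosh, one_le_div (Real.sqrt_pos.2 (by positivity))]
  linarith

theorem hyperbolaCosh_theta1minus (hdet : 0 < detΣ) (hμ2 : 0 < μ2) :
    hyperbolaCosh σ11 σ12 σ22 μ1 μ2 (theta1minus σ11 σ12 σ22 μ1 μ2) = 1 := by
  rw [hyperbolaCosh, theta1minus, mul_div_cancel₀ _ hdet.ne', sub_sub_cancel,
    div_self (Real.sqrt_pos.2 (by positivity)).ne']

theorem hyperbolaCosh_sq_sub_one (hdet : 0 < detΣ) (hμ2 : 0 < μ2) (θ1 : ℝ) :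
    hyperbolaCosh σ11 σ12 σ22 μ1 μ2 θ1 ^ 2 - 1
      = -detΣ * discrim1 σ11 σ12 σ22 μ1 μ2 θ1 / radicand₁ := by
  have : 0 < radicand₁ := by positivity
  rw [hyperbolaCosh, discrim1, div_pow, Real.sq_sqrt this.le, div_sub_one this.ne']
  ring

theorem discrim1_nonpos (hdet : 0 < detΣ) (hμ2 : 0 < μ2) {θ1 : ℝ}
    (hθ1 : θ1 ≤ theta1minus σ11 σ12 σ22 μ1 μ2) : discrim1 σ11 σ12 σ22 μ1 μ2 θ1 ≤ 0 := by
  have hc := one_le_hyperbolaCosh hdet hμ2 hθ1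
  have h : 0 ≤ hyperbolaCosh σ11 σ12 σ22 μ1 μ2 θ1 ^ 2 - 1 := by nlinarith
  rw [hyperbolaCosh_sq_sub_one hdet hμ2, le_div_iff₀ (by positivity), zero_mul] at h
  nlinarith

theorem gluingW_ofReal_add_mul_I (p q : ℝ) :
    gluingW σ11 σ12 σ22 μ1 μ2 (p + q * I)
      = chebT ((Real.pi / betaAngle σ11 σ12 σ22 : ℝ) : ℂ)
          ((-(2 * p - (theta2plus σ11 σ12 σ22 μ1 μ2 + theta2minus σ11 σ12 σ22 μ1 μ2))
              / (theta2plus σ11 σ12 σ22 μ1 μ2 - theta2minus σ11 σ12 σ22 μ1 μ2) : ℝ)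
            + (-(2 * q) / (theta2plus σ11 σ12 σ22 μ1 μ2 - theta2minus σ11 σ12 σ22 μ1 μ2) : ℝ)
              * I) := by
  rw [gluingW]
  congr 1
  push_cast
  ring

theorem gluingW_of_sq_eq_discrim1C (hσ22 : 0 < σ22) (hdet : 0 < detΣ) (hμ2 : 0 < μ2) {θ1 : ℝ}
    (hθ1 : θ1 ≤ theta1minus σ11 σ12 σ22 μ1 μ2) {s : ℂ}
    (hs : s ^ 2 = discrim1C σ11 σ12 σ22 μ1 μ2 θ1) :
    gluingW σ11 σ12 σ22 μ1 μ2 ((-(σ12 * θ1 + μ2) + s) / σ22)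
      = -Real.cosh (Real.pi / betaAngle σ11 σ12 σ22
          * Real.arcosh (hyperbolaCosh σ11 σ12 σ22 μ1 μ2 θ1)) := by
  rw [discrim1C_ofReal] at hs
  obtain ⟨y, rfl, hy⟩ := exists_eq_ofReal_mul_I_of_sq_eq (discrim1_nonpos hdet hμ2 hθ1) hs
  obtain ⟨hβ₀, hβπ⟩ := betaAngle_pos_and_lt_pi hdet
  have hσ11 : σ11 ≠ 0 := by rintro rfl; nlinarith
  have hradicand₂ := radicand₂_pos (μ1 := μ1) hdet hμ2
  have hsqrt := (Real.sqrt_pos.2 hradicand₂).ne'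
  rw [show (-(σ12 * θ1 + μ2) + y * I) / σ22
      = ((-(σ12 * θ1 + μ2) / σ22 : ℝ) : ℂ) + (y / σ22 : ℝ) * I by push_cast; ring,
    gluingW_ofReal_add_mul_I]
  apply chebT_pi_div_eq_neg_cosh_arcosh hβ₀ hβπ (one_le_hyperbolaCosh hdet hμ2 hθ1)
  case hx =>
    rw [theta2plus_add_theta2minus, theta2plus_sub_theta2minus, cos_betaAngle hdet, hyperbolaCosh,
      div_mul_div_comm, sqrt_radicand₁_mul_sqrt hσ22 hdet]
    -- `field_simp` recognises `detΣ ≠ 0` only while `detΣ` is an atom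
    set D := detΣ with hD
    field_simp
    rw [hD]
    ring
  case hy =>
    rw [theta2plus_sub_theta2minus, sin_betaAngle_sq hdet, hyperbolaCosh_sq_sub_one hdet hμ2,
      div_pow, div_pow, mul_pow, Real.sq_sqrt hradicand₂.le]
    set D := detΣ with hD
    field_simp
    rw [hy, hD, discrim1]
    ring

theorem gluingW_Theta2plus (hσ22 : 0 < σ22) (hdet : 0 < detΣ) (hμ2 : 0 < μ2) {θ1 : ℝ}
    (hθ1 : θ1 ≤ theta1minus σ11 σ12 σ22 μ1 μ2) :
    gluingW σ11 σ12 σ22 μ1 μ2 (Theta2plus σ11 σ12 σ22 μ1 μ2 θ1)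
      = -Real.cosh (Real.pi / betaAngle σ11 σ12 σ22
          * Real.arcosh (hyperbolaCosh σ11 σ12 σ22 μ1 μ2 θ1)) :=
  gluingW_of_sq_eq_discrim1C hσ22 hdet hμ2 hθ1 (cpow_one_half_sq _)

theorem gluingW_Theta2minus (hσ22 : 0 < σ22) (hdet : 0 < detΣ) (hμ2 : 0 < μ2) {θ1 : ℝ}
    (hθ1 : θ1 ≤ theta1minus σ11 σ12 σ22 μ1 μ2) :
    gluingW σ11 σ12 σ22 μ1 μ2 (Theta2minus σ11 σ12 σ22 μ1 μ2 θ1)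
      = -Real.cosh (Real.pi / betaAngle σ11 σ12 σ22
          * Real.arcosh (hyperbolaCosh σ11 σ12 σ22 μ1 μ2 θ1)) := by
  rw [Theta2minus, sub_eq_add_neg]
  exact gluingW_of_sq_eq_discrim1C hσ22 hdet hμ2 hθ1 (by rw [neg_sq, cpow_one_half_sq])

end Model

theorem stmt_10_general (σ11 σ12 σ22 μ1 μ2 : ℝ) (hσ22 : 0 < σ22)
    (hdet : 0 < σ11 * σ22 - σ12^2) (hμ2 : 0 < μ2) :
    (∀ θ1 : ℝ, θ1 ≤ theta1minus σ11 σ12 σ22 μ1 μ2 →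
      gluingW σ11 σ12 σ22 μ1 μ2 (Theta2plus σ11 σ12 σ22 μ1 μ2 (θ1 : ℂ))
        = gluingW σ11 σ12 σ22 μ1 μ2 (Theta2minus σ11 σ12 σ22 μ1 μ2 (θ1 : ℂ))) ∧
    gluingW σ11 σ12 σ22 μ1 μ2
      (Theta2plus σ11 σ12 σ22 μ1 μ2 ((theta1minus σ11 σ12 σ22 μ1 μ2 : ℝ) : ℂ)) = -1 := by
  refine ⟨fun θ1 hθ1 => ?_, ?_⟩
  · rw [gluingW_Theta2plus hσ22 hdet hμ2 hθ1, gluingW_Theta2minus hσ22 hdet hμ2 hθ1]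
  · rw [gluingW_Theta2plus hσ22 hdet hμ2 le_rfl, hyperbolaCosh_theta1minus hdet hμ2,
      Real.arcosh_zero, mul_zero, Real.cosh_zero, ofReal_one]

/-- `w` glues the two halves of the hyperbola `ℛ`, and takes value `−1` at its vertex. -/
theorem stmt_10 (σ11 σ12 σ22 μ1 μ2 : ℝ) (hσ11 : 0 < σ11) (hσ22 : 0 < σ22)
    (hdet : 0 < σ11 * σ22 - σ12^2) (hμ1 : 0 < μ1) (hμ2 : 0 < μ2) :
    (∀ θ1 : ℝ, θ1 ≤ theta1minus σ11 σ12 σ22 μ1 μ2 →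
      gluingW σ11 σ12 σ22 μ1 μ2 (Theta2plus σ11 σ12 σ22 μ1 μ2 (θ1 : ℂ))
        = gluingW σ11 σ12 σ22 μ1 μ2 (Theta2minus σ11 σ12 σ22 μ1 μ2 (θ1 : ℂ))) ∧
    gluingW σ11 σ12 σ22 μ1 μ2
      (Theta2plus σ11 σ12 σ22 μ1 μ2 ((theta1minus σ11 σ12 σ22 μ1 μ2 : ℝ) : ℂ)) = -1 :=
  stmt_10_general σ11 σ12 σ22 μ1 μ2 hσ22 hdet hμ2
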